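/- Let S be a left CP-semiring and e : ℕ → S a sequence of multiplicative idempotents (e i * e i = e i for all i) such that e i * e j = 0 whenever i < j. Then there exists a natural number n such that e i = 0 for all i > n. -/

import Mathlib

universe u

/-- A left CP-semiring: every cyclic left `S`-semimodule is projective. -/
def IsLeftCPSemiring (S : Type u) [Semiring S] : Prop :=
  ∀ (M : Type u) [AddCommMonoid M] [Module S M],
    (∃ m : M, Submodule.span S {m} = ⊤) → Module.Projective S M

/-!
For a left ideal `I`, the Bourne quotient `S/I` is cyclic, hence projective, so its projection
`π : S → S/I` has a linear section `h`. Then `f := h (π 1)` satisfies `π f = π 1` and `x * f = 0`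
for `x ∈ I`. Take `I` to be the left ideal generated by the `e i`: `π f = π 1` means
`f + a = 1 + b` with `a, b ∈ I`, and `a, b` are finite combinations of the `e j`, so
`a * e i = b * e i = 0` and hence `f * e i = e i` for large `i`. Then
`e i = e i * (f * e i) = (e i * f) * e i = 0`.
-/

open Filter

namespace Submodule

variable {S M : Type*} [Semiring S] [AddCommMonoid M] [Module S M] (N : Submodule S M)

/-- The Bourne congruence: without subtraction, this replaces the quotient `M ⧸ N`. -/
def bourneCon : ModuleCon S M where
  r x y := ∃ a ∈ N, ∃ b ∈ N, x + a = y + b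
  iseqv.refl x := ⟨0, N.zero_mem, 0, N.zero_mem, rfl⟩
  iseqv.symm := fun ⟨a, ha, b, hb, h⟩ => ⟨b, hb, a, ha, h.symm⟩
  iseqv.trans := fun ⟨a, ha, b, hb, hxy⟩ ⟨a', ha', b', hb', hyz⟩ =>
    ⟨a + a', N.add_mem ha ha', b' + b, N.add_mem hb' hb, by
      rw [← add_assoc, hxy, add_right_comm, hyz, add_assoc]⟩
  add' := fun ⟨a, ha, b, hb, hxy⟩ ⟨a', ha', b', hb', hwz⟩ =>
    ⟨a + a', N.add_mem ha ha', b + b', N.add_mem hb hb', by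
      rw [add_add_add_comm, hxy, hwz, add_add_add_comm]⟩
  smul s _ _ := fun ⟨a, ha, b, hb, h⟩ =>
    ⟨s • a, N.smul_mem s ha, s • b, N.smul_mem s hb, by rw [← smul_add, h, smul_add]⟩

def bourneMk : M →ₗ[S] N.bourneCon.Quotient where
  toFun x := Quotient.mk'' x
  map_add' _ _ := rfl
  map_smul' _ _ := rfl

theorem bourneMk_surjective : Function.Surjective N.bourneMk :=
  Quotient.mk''_surjective

theorem bourneMk_eq_bourneMk_iff {x y : M} :
    N.bourneMk x = N.bourneMk y ↔ ∃ a ∈ N, ∃ b ∈ N, x + a = y + b :=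
  Quotient.eq''

theorem bourneMk_eq_zero_of_mem {x : M} (hx : x ∈ N) : N.bourneMk x = 0 :=
  (N.bourneMk_eq_bourneMk_iff (y := 0)).mpr ⟨0, N.zero_mem, x, hx, by rw [add_zero, zero_add]⟩

theorem span_singleton_bourneMk_one_eq_top (I : Submodule S S) :
    span S {I.bourneMk 1} = ⊤ := by
  refine (span_singleton_eq_top_iff S _).mpr fun v => ?_
  obtain ⟨y, rfl⟩ := I.bourneMk_surjective v
  exact ⟨y, by rw [← map_smul, smul_eq_mul, mul_one]⟩

end Submodule

theorem eventually_mul_eq_zero_of_mem_span_range {S ι : Type*} [Semiring S] [Preorder ι]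
    [NoMaxOrder ι] {e : ι → S} (horth : ∀ i j, i < j → e i * e j = 0) {x : S}
    (hx : x ∈ Submodule.span S (Set.range e)) : ∀ᶠ i in atTop, x * e i = 0 := by
  induction hx using Submodule.span_induction with
  | mem _ hx =>
    obtain ⟨j, rfl⟩ := hx
    filter_upwards [eventually_gt_atTop j] with i hji using horth j i hji
  | zero => exact Eventually.of_forall fun i => zero_mul (e i)
  | add x y _ _ hx hy =>
    filter_upwards [hx, hy] with i hxi hyi
    rw [add_mul, hxi, hyi, add_zero]
  | smul s x _ hx =>
    filter_upwards [hx] with i hxi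
    rw [smul_eq_mul, mul_assoc, hxi, mul_zero]

theorem IsLeftCPSemiring.exists_bourneMk_eq_one_and_mul_eq_zero {S : Type u} [Semiring S]
    (hS : IsLeftCPSemiring S) (I : Submodule S S) :
    ∃ f : S, I.bourneMk f = I.bourneMk 1 ∧ ∀ x ∈ I, x * f = 0 := by
  have := hS _ ⟨_, I.span_singleton_bourneMk_one_eq_top⟩
  obtain ⟨h, hh⟩ := Module.projective_lifting_property I.bourneMk LinearMap.id
    I.bourneMk_surjective
  refine ⟨h (I.bourneMk 1), LinearMap.congr_fun hh _, fun x hx => ?_⟩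
  calc x * h (I.bourneMk 1) = h (x • I.bourneMk 1) := (map_smul h x _).symm
    _ = h (I.bourneMk x) := by rw [← map_smul, smul_eq_mul, mul_one]
    _ = 0 := by rw [I.bourneMk_eq_zero_of_mem hx, map_zero]

/-- in a left CP-semiring, any sequence of multiplicative idempotents
`e i` with `e i * e j = 0` for `i < j` is eventually zero. -/
theorem eventually_zero_of_orthogonal_idempotents
    {S : Type u} [Semiring S] (hS : IsLeftCPSemiring S)
    (e : ℕ → S) (hidem : ∀ i, e i * e i = e i)
    (horth : ∀ i j, i < j → e i * e j = 0) :
    ∃ n : ℕ, ∀ i, n < i → e i = 0 := by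
  set I := Submodule.span S (Set.range e)
  obtain ⟨f, hf, hIf⟩ := hS.exists_bourneMk_eq_one_and_mul_eq_zero I
  obtain ⟨a, ha, b, hb, hab⟩ := I.bourneMk_eq_bourneMk_iff.mp hf
  have hfe : ∀ᶠ i in atTop, f * e i = e i := by
    filter_upwards [eventually_mul_eq_zero_of_mem_span_range horth ha,
      eventually_mul_eq_zero_of_mem_span_range horth hb] with i hai hbi
    simpa only [add_mul, hai, hbi, add_zero, one_mul] using congrArg (· * e i) hab
  obtain ⟨n, hn⟩ := eventually_atTop.mp hfe
  refine ⟨n, fun i hi => ?_⟩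
  calc e i = e i * f * e i := by rw [mul_assoc, hn i hi.le, hidem]
    _ = 0 := by rw [hIf _ (Submodule.subset_span ⟨i, rfl⟩), zero_mul]
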